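/- arXiv:1905.11816 — 2 statements merged into one kernel-verified Lean document; each statement's English description precedes it below -/
import Mathlib

section
/- Let f : [m, M] → ℝ be a concave function with m < M, and define β(m,M,f) = min_{t ∈ [m,M]} ( (f(M)-f(m))/(M-m) · (t-m) + f(m) - f(t) ). Then for all a, b ∈ [m,M] and v ∈ [0,1], β(m,M,f) ≤ (1-v)f(a) + v f(b) - f((1-v)a + v b) ≤ 0 ≤ -β(m,M,f). -/
/-!
Concavity puts `f` above its chord `ℓ` through `(m, f m)` and `(M, f M)`. Since `ℓ` is affine,
the Jensen gap at `c = (1-v)a + vb` is at least `ℓ c - f c`, a value of the function whose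
infimum is `β`; it is at most `0` by concavity itself, and `β ≤ ℓ m - f m = 0`. The infimum is a
genuine one because a concave function on a compact interval is bounded above: reflecting `t` to
`m + M - t` gives `f t ≤ 2 f ((m + M) / 2) - min (f m) (f M)`.
-/

open Set

noncomputable section

def chord (f : ℝ → ℝ) (m M t : ℝ) : ℝ := (f M - f m) / (M - m) * (t - m) + f m

@[simp]
lemma chord_left (f : ℝ → ℝ) (m M : ℝ) : chord f m M m = f m := by
  simp [chord]

lemma chord_affineCombination (f : ℝ → ℝ) (m M a b v : ℝ) :
    chord f m M ((1 - v) * a + v * b) = (1 - v) * chord f m M a + v * chord f m M b := by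
  unfold chord; ring

lemma continuous_chord (f : ℝ → ℝ) (m M : ℝ) : Continuous (chord f m M) := by
  unfold chord; fun_prop

lemma ConcaveOn.chord_le {s : Set ℝ} {f : ℝ → ℝ} (hf : ConcaveOn ℝ s f) {m M t : ℝ}
    (hm : m ∈ s) (hM : M ∈ s) (hmM : m < M) (ht : t ∈ Icc m M) : chord f m M t ≤ f t := by
  have hMm : 0 < M - m := sub_pos.2 hmM
  set l := (t - m) / (M - m)
  have hl0 : 0 ≤ l := div_nonneg (by linarith [ht.1]) hMm.le
  have hl1 : l ≤ 1 := (div_le_one hMm).2 (by linarith [ht.2])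
  have hpoint : (1 - l) • m + l • M = t := by
    simp only [smul_eq_mul, l]; field_simp; ring
  have hchord : chord f m M t = (1 - l) * f m + l * f M := by
    simp only [chord, l]; field_simp; ring
  have hconcave := hf.2 hm hM (sub_nonneg.2 hl1) hl0 (sub_add_cancel 1 l)
  rw [hpoint] at hconcave
  simpa only [hchord, smul_eq_mul] using hconcave

lemma ConcaveOn.bddAbove_image_Icc {f : ℝ → ℝ} {m M : ℝ} (hf : ConcaveOn ℝ (Icc m M) f) :
    BddAbove (f '' Icc m M) := by
  refine ⟨2 * f ((m + M) / 2) - min (f m) (f M), ?_⟩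
  rintro _ ⟨t, ht, rfl⟩
  have hmM : m ≤ M := ht.1.trans ht.2
  have hreflect : m + M - t ∈ Icc m M := ⟨by linarith [ht.2], by linarith [ht.1]⟩
  have hmid := hf.2 ht hreflect (by norm_num : (0 : ℝ) ≤ 1 / 2) (by norm_num : (0 : ℝ) ≤ 1 / 2)
    (by norm_num)
  have hmin := hf.min_le_of_mem_Icc (left_mem_Icc.2 hmM) (right_mem_Icc.2 hmM) hreflect
  simp only [smul_eq_mul] at hmid
  rw [show 1 / 2 * t + 1 / 2 * (m + M - t) = (m + M) / 2 by ring] at hmid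
  linarith

lemma ConcaveOn.bddBelow_chord_sub {f : ℝ → ℝ} {m M : ℝ} (hf : ConcaveOn ℝ (Icc m M) f) :
    BddBelow ((fun t => chord f m M t - f t) '' Icc m M) := by
  obtain ⟨A, hA⟩ := isCompact_Icc.bddBelow_image (continuous_chord f m M).continuousOn
  obtain ⟨B, hB⟩ := hf.bddAbove_image_Icc
  refine ⟨A - B, ?_⟩
  rintro _ ⟨t, ht, rfl⟩
  linarith [hA (mem_image_of_mem _ ht), hB (mem_image_of_mem _ ht)]

end

theorem concave_jensen_gap_bounds (m M : ℝ) (hmM : m < M) (f : ℝ → ℝ)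
    (hf : ConcaveOn ℝ (Set.Icc m M) f)
    (β : ℝ)
    (hβ : β = sInf ((fun t => (f M - f m) / (M - m) * (t - m) + f m - f t) '' Set.Icc m M))
    (a b : ℝ) (ha : a ∈ Set.Icc m M) (hb : b ∈ Set.Icc m M)
    (v : ℝ) (hv : v ∈ Set.Icc (0:ℝ) 1) :
    β ≤ (1-v) * f a + v * f b - f ((1-v) * a + v * b) ∧
      (1-v) * f a + v * f b - f ((1-v) * a + v * b) ≤ 0 ∧ (0:ℝ) ≤ -β := by
  obtain ⟨hv0, hv1⟩ := hv
  have hm : m ∈ Icc m M := left_mem_Icc.2 hmM.le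
  have hM : M ∈ Icc m M := right_mem_Icc.2 hmM.le
  have hc : (1 - v) * a + v * b ∈ Icc m M :=
    convex_Icc m M ha hb (sub_nonneg.2 hv1) hv0 (by ring)
  have hβ_le : ∀ t ∈ Icc m M, β ≤ chord f m M t - f t := fun t ht =>
    hβ ▸ csInf_le hf.bddBelow_chord_sub (mem_image_of_mem _ ht)
  have hjensen := hf.2 ha hb (sub_nonneg.2 hv1) hv0 (by ring)
  simp only [smul_eq_mul] at hjensen
  have hchord_a := mul_le_mul_of_nonneg_left (hf.chord_le hm hM hmM ha) (sub_nonneg.2 hv1)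
  have hchord_b := mul_le_mul_of_nonneg_left (hf.chord_le hm hM hmM hb) hv0
  have hβ_c := hβ_le _ hc
  rw [chord_affineCombination] at hβ_c
  refine ⟨by linarith, by linarith, ?_⟩
  simpa using hβ_le m hm
end

section
/- Let A be an n×n Hermitian complex matrix with all eigenvalues in an interval J, let f : J → ℝ be concave, and let x ∈ ℂⁿ be a unit vector. Then ⟨f(A)x, x⟩ ≤ f(⟨Ax, x⟩), where f(A) is defined by the functional calculus (applying f to the eigenvalues in a spectral decomposition of A). -/
/-!
Diagonalise `A = U D Uᴴ` with `U` unitary. Both sides of the inequality are then read in the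
coordinates `y = Uᴴ x`: `⟨f(A)x, x⟩ = ∑ᵢ |yᵢ|² f(λᵢ)` and `⟨Ax, x⟩ = ∑ᵢ |yᵢ|² λᵢ`, where the
weights `|yᵢ|²` sum to `‖x‖² = 1`. The claim is thus the finite Jensen inequality for the concave
function `f` at the eigenvalues `λᵢ ∈ J`.
-/

namespace Matrix

variable {𝕜 n : Type*} [RCLike 𝕜] [Fintype n]

lemma star_dotProduct_conj_mulVec (U B : Matrix n n 𝕜) (x : n → 𝕜) :
    star x ⬝ᵥ ((U * B * star U) *ᵥ x) = star (star U *ᵥ x) ⬝ᵥ (B *ᵥ (star U *ᵥ x)) := by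
  rw [← mulVec_mulVec, ← mulVec_mulVec, dotProduct_mulVec, star_mulVec,
    star_eq_conjTranspose, conjTranspose_conjTranspose]

lemma star_dotProduct_diagonal_mulVec [DecidableEq n] (d y : n → 𝕜) :
    star y ⬝ᵥ (diagonal d *ᵥ y) = ∑ i, d i * (‖y i‖ ^ 2 : ℝ) := by
  simp only [dotProduct, mulVec_diagonal, Pi.star_apply, RCLike.star_def]
  refine Finset.sum_congr rfl fun i _ => ?_
  rw [RCLike.ofReal_pow, ← RCLike.conj_mul]
  ring

lemma star_dotProduct_self_eq_sum (y : n → 𝕜) :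
    star y ⬝ᵥ y = ∑ i, (‖y i‖ ^ 2 : ℝ) := by
  classical
  simpa using star_dotProduct_diagonal_mulVec 1 y

lemma star_dotProduct_star_mulVec_self_of_mem_unitaryGroup [DecidableEq n] {U : Matrix n n 𝕜}
    (hU : U ∈ unitaryGroup n 𝕜) (x : n → 𝕜) :
    star (star U *ᵥ x) ⬝ᵥ (star U *ᵥ x) = star x ⬝ᵥ x := by
  simpa [Unitary.mul_star_self_of_mem hU] using (star_dotProduct_conj_mulVec U 1 x).symm

namespace IsHermitian

variable [DecidableEq n] {A : Matrix n n 𝕜} (hA : A.IsHermitian)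

/-- The weight `|⟨uᵢ, x⟩|²` of `x` on the `i`-th eigenvector of `A`. -/
noncomputable def spectralWeight (x : n → 𝕜) (i : n) : ℝ :=
  ‖(star (hA.eigenvectorUnitary : Matrix n n 𝕜) *ᵥ x) i‖ ^ 2

lemma sum_spectralWeight (x : n → 𝕜) :
    ∑ i, hA.spectralWeight x i = RCLike.re (star x ⬝ᵥ x) := by
  have hnorm := star_dotProduct_star_mulVec_self_of_mem_unitaryGroup hA.eigenvectorUnitary.2 x
  rw [star_dotProduct_self_eq_sum] at hnorm
  simp [spectralWeight, ← hnorm]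

lemma re_star_dotProduct_cfc_mulVec (f : ℝ → ℝ) (x : n → 𝕜) :
    RCLike.re (star x ⬝ᵥ (hA.cfc f *ᵥ x)) = ∑ i, hA.spectralWeight x i * f (hA.eigenvalues i) := by
  rw [IsHermitian.cfc, Unitary.conjStarAlgAut_apply, star_dotProduct_conj_mulVec,
    star_dotProduct_diagonal_mulVec, map_sum]
  refine Finset.sum_congr rfl fun i _ => ?_
  simp [spectralWeight, mul_comm]

lemma cfc_id : hA.cfc id = A := by
  rw [← cfc_eq]
  exact _root_.cfc_id ℝ A

lemma re_star_dotProduct_mulVec (x : n → 𝕜) :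
    RCLike.re (star x ⬝ᵥ (A *ᵥ x)) = ∑ i, hA.spectralWeight x i * hA.eigenvalues i := by
  conv_lhs => rw [← hA.cfc_id]
  exact hA.re_star_dotProduct_cfc_mulVec id x

end IsHermitian

end Matrix

open Matrix in
theorem operator_jensen_vector_state (n : ℕ) (J : Set ℝ)
    (A : Matrix (Fin n) (Fin n) ℂ) (hA : A.IsHermitian)
    (hspec : ∀ i, hA.eigenvalues i ∈ J)
    (f : ℝ → ℝ) (hf : ConcaveOn ℝ J f)
    (x : Fin n → ℂ) (hx : star x ⬝ᵥ x = 1) :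
    (star x ⬝ᵥ (hA.cfc f *ᵥ x)).re ≤ f ((star x ⬝ᵥ (A *ᵥ x)).re) := by
  have hweights : ∑ i, hA.spectralWeight x i = 1 := by
    simpa [hx] using hA.sum_spectralWeight x
  rw [← RCLike.re_to_complex, ← RCLike.re_to_complex, hA.re_star_dotProduct_cfc_mulVec,
    hA.re_star_dotProduct_mulVec]
  exact hf.le_map_sum (fun i _ => sq_nonneg _) hweights fun i _ => hspec i
end
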